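/- Let ρ ≥ 0, ν ≥ 0, ε > 0, 0 < T < ∞, let E : ℝ^d → ℝ be continuously differentiable, and let u ∈ C⁴([0,T]; ℝ^d) satisfy ∫_0^T e^{-t/ε} ( ε²ρ u''(t)·η''(t) + εν u'(t)·η'(t) + ∇E(u(t))·η(t) ) dt = 0 for every smooth η : [0,T] → ℝ^d with η(0) = 0 and η'(0) = 0. Then u satisfies the fourth-order ODE ε²ρ u'''' − 2ερ u''' + (ρ − εν) u'' + ν u' + ∇E(u) = 0 on [0,T], together with the natural final conditions ε²ρ u''(T) = 0 and −ε²ρ u'''(T) + εν u'(T) = 0. -/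

import Mathlib

/-!
Two integrations by parts against the weight `e^{-t/ε}` turn the first variation into
`∫₀ᵀ e^{-t/ε} ⟪L t, η t⟫` plus a boundary term at `T` (the one at `0` vanishes because
`η 0 = η' 0 = 0`), where `L` is the Euler–Lagrange operator applied to `u`, plus `∇E(u)`.
Test functions supported in `(0, T)` kill the boundary term, so the fundamental lemma of the
calculus of variations gives `L = 0`. What remains is
`⟪ε²ρ u''(T), η'(T)⟫ + ⟪ερ u''(T) - ε²ρ u'''(T) + εν u'(T), η(T)⟫ = 0` for every admissible `η`;
the test functions `t²(t - T) • v` and `t² • v` separate the two vectors.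
-/

open scoped RealInnerProductSpace ContDiff

open Set Real MeasureTheory intervalIntegral

theorem eqOn_zero_of_forall_intervalIntegral_smul_eq_zero {F : Type*} [NormedAddCommGroup F]
    [NormedSpace ℝ F] [CompleteSpace F] {f : ℝ → F} {a b : ℝ} (hab : a < b)
    (hf : ContinuousOn f (Icc a b))
    (h : ∀ φ : ℝ → ℝ, ContDiff ℝ ∞ φ → HasCompactSupport φ → tsupport φ ⊆ Ioo a b →
      ∫ t in a..b, φ t • f t = 0) :
    EqOn f 0 (Icc a b) := by
  have hae : ∀ᵐ t, t ∈ Ioo a b → f t = 0 :=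
    isOpen_Ioo.ae_eq_zero_of_integral_contDiff_smul_eq_zero
      ((hf.mono Ioo_subset_Icc_self).locallyIntegrableOn measurableSet_Ioo)
      fun φ hφ hφc hφs => by
        rw [← integral_eq_integral_of_support_subset (f := fun t => φ t • f t)
          ((Function.support_smul_subset_left φ f).trans
            ((subset_tsupport φ).trans (hφs.trans Ioo_subset_Ioc_self)))]
        exact h φ hφ hφc hφs
  have hIoo : EqOn f 0 (Ioo a b) :=
    Measure.eqOn_open_of_ae_eq ((ae_restrict_iff' measurableSet_Ioo).2 hae) isOpen_Ioo
      (hf.mono Ioo_subset_Icc_self) continuousOn_const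
  exact hIoo.of_subset_closure hf continuousOn_const Ioo_subset_Icc_self (closure_Ioo hab.ne).ge

section InnerProductSpace

variable {F : Type*} [NormedAddCommGroup F] [InnerProductSpace ℝ F]

theorem eqOn_zero_of_forall_intervalIntegral_inner_eq_zero {f : ℝ → F} {a b : ℝ} (hab : a < b)
    (hf : ContinuousOn f (Icc a b))
    (h : ∀ η : ℝ → F, ContDiff ℝ ∞ η → HasCompactSupport η → tsupport η ⊆ Ioo a b →
      ∫ t in a..b, ⟪f t, η t⟫ = 0) :
    EqOn f 0 (Icc a b) := by
  have hv : ∀ v : F, EqOn (fun t => ⟪f t, v⟫) 0 (Icc a b) := fun v =>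
    eqOn_zero_of_forall_intervalIntegral_smul_eq_zero hab (hf.inner continuousOn_const)
      fun φ hφ hφc hφs => by
        simpa only [inner_smul_right, smul_eq_mul, mul_comm] using
          h (fun t => φ t • v) (hφ.smul contDiff_const) hφc.smul_right
            ((tsupport_smul_subset_left _ _).trans hφs)
  exact fun t ht => inner_self_eq_zero.mp (hv (f t) ht)

theorem eq_zero_of_forall_inner_deriv_add_inner_eq_zero {a b : F} {T : ℝ} (hT : T ≠ 0)
    (h : ∀ η : ℝ → F, ContDiff ℝ ∞ η → η 0 = 0 → deriv η 0 = 0 →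
      ⟪a, deriv η T⟫ + ⟪b, η T⟫ = 0) :
    a = 0 ∧ b = 0 := by
  have hsmul_const : ∀ p : ℝ → ℝ, ContDiff ℝ ∞ p → p 0 = 0 → deriv p 0 = 0 → ∀ v : F,
      deriv p T * ⟪a, v⟫ + p T * ⟪b, v⟫ = 0 := by
    intro p hp hp0 hp0' v
    have hderiv : ∀ t, deriv (fun s => p s • v) t = deriv p t • v := fun t =>
      ((hp.differentiable (by simp) t).hasDerivAt.smul_const v).deriv
    simpa [hderiv, hp0, hp0', inner_smul_right] using
      h (fun s => p s • v) (hp.smul contDiff_const) (by simp [hp0]) (by simp [hderiv, hp0'])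
  have ha : a = 0 := by
    have hcubic : deriv (fun s => s ^ 2 * (s - T)) T = T ^ 2 := by simp
    have := hsmul_const (fun s => s ^ 2 * (s - T)) (by fun_prop) (by simp) (by simp) a
    simp only [hcubic, sub_self, mul_zero, zero_mul, add_zero] at this
    exact inner_self_eq_zero.mp ((mul_eq_zero.mp this).resolve_left (by positivity))
  refine ⟨ha, ?_⟩
  have := hsmul_const (fun s => s ^ 2) (by fun_prop) (by simp) (by simp) b
  simp only [ha, inner_zero_left, mul_zero, zero_add] at this
  exact inner_self_eq_zero.mp ((mul_eq_zero.mp this).resolve_left (by positivity))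

variable (ρ ν ε : ℝ) (u1 u2 u3 u4 : ℝ → F)

def eulerLagrangeOperator (t : ℝ) : F :=
  (ε ^ 2 * ρ) • u4 t - (2 * ε * ρ) • u3 t + (ρ - ε * ν) • u2 t + ν • u1 t

noncomputable def boundaryTerm (η η1 : ℝ → F) (t : ℝ) : ℝ :=
  exp (-t / ε) * (⟪(ε ^ 2 * ρ) • u2 t, η1 t⟫
    + ⟪(ε * ρ) • u2 t - (ε ^ 2 * ρ) • u3 t + (ε * ν) • u1 t, η t⟫)

variable {ρ ν ε u1 u2 u3 u4}

theorem hasDerivWithinAt_boundaryTerm (hε : ε ≠ 0) {s : Set ℝ} {t : ℝ} {η η1 η2 : ℝ → F}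
    (hu2 : HasDerivWithinAt u1 (u2 t) s t) (hu3 : HasDerivWithinAt u2 (u3 t) s t)
    (hu4 : HasDerivWithinAt u3 (u4 t) s t)
    (hη : HasDerivAt η (η1 t) t) (hη1 : HasDerivAt η1 (η2 t) t) :
    HasDerivWithinAt (boundaryTerm ρ ν ε u1 u2 u3 η η1)
      (exp (-t / ε) * (ε ^ 2 * ρ * ⟪u2 t, η2 t⟫ + ε * ν * ⟪u1 t, η1 t⟫
        - ⟪eulerLagrangeOperator ρ ν ε u1 u2 u3 u4 t, η t⟫)) s t := by
  have hexp : HasDerivAt (fun s => exp (-s / ε)) (exp (-t / ε) * (-1 / ε)) t :=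
    ((hasDerivAt_neg t).div_const ε).exp
  have hbracket := ((hu3.const_smul (ε ^ 2 * ρ)).inner ℝ hη1.hasDerivWithinAt).add
    ((((hu3.const_smul (ε * ρ)).sub (hu4.const_smul (ε ^ 2 * ρ))).add
      (hu2.const_smul (ε * ν))).inner ℝ hη.hasDerivWithinAt)
  refine (hexp.hasDerivWithinAt.mul hbracket).congr_deriv ?_
  simp only [eulerLagrangeOperator, Pi.add_apply, Pi.sub_apply, Pi.smul_apply, inner_add_left,
    inner_sub_left, real_inner_smul_left]
  field_simp
  ring

theorem integral_firstVariation_eq (hε : ε ≠ 0) {a b : ℝ} (hab : a ≤ b) {g η : ℝ → F}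
    (hu2 : ∀ t ∈ Icc a b, HasDerivWithinAt u1 (u2 t) (Icc a b) t)
    (hu3 : ∀ t ∈ Icc a b, HasDerivWithinAt u2 (u3 t) (Icc a b) t)
    (hu4 : ∀ t ∈ Icc a b, HasDerivWithinAt u3 (u4 t) (Icc a b) t)
    (hu4c : ContinuousOn u4 (Icc a b)) (hg : ContinuousOn g (Icc a b)) (hη : ContDiff ℝ 2 η) :
    ∫ t in a..b, exp (-t / ε) * (ε ^ 2 * ρ * ⟪u2 t, iteratedDeriv 2 η t⟫
        + ε * ν * ⟪u1 t, deriv η t⟫ + ⟪g t, η t⟫)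
      = (∫ t in a..b, exp (-t / ε) * ⟪eulerLagrangeOperator ρ ν ε u1 u2 u3 u4 t + g t, η t⟫)
        + (boundaryTerm ρ ν ε u1 u2 u3 η (deriv η) b
          - boundaryTerm ρ ν ε u1 u2 u3 η (deriv η) a) := by
  have hη1 : ContDiff ℝ 1 (deriv η) := (contDiff_succ_iff_deriv.mp hη).2.2
  have hη2 : iteratedDeriv 2 η = deriv (deriv η) := by
    rw [iteratedDeriv_succ, iteratedDeriv_one]
  have hu1c : ContinuousOn u1 (Icc a b) := fun t ht => (hu2 t ht).continuousWithinAt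
  have hu2c : ContinuousOn u2 (Icc a b) := fun t ht => (hu3 t ht).continuousWithinAt
  have hu3c : ContinuousOn u3 (Icc a b) := fun t ht => (hu4 t ht).continuousWithinAt
  have hηc : Continuous η := hη.continuous
  have hη1c : Continuous (deriv η) := hη1.continuous
  have hη2c : Continuous (deriv (deriv η)) := hη1.continuous_deriv le_rfl
  set I := fun t => exp (-t / ε) * (ε ^ 2 * ρ * ⟪u2 t, iteratedDeriv 2 η t⟫
    + ε * ν * ⟪u1 t, deriv η t⟫ + ⟪g t, η t⟫) with hI
  set J := fun t => exp (-t / ε) * ⟪eulerLagrangeOperator ρ ν ε u1 u2 u3 u4 t + g t, η t⟫ with hJ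
  have hderiv : ∀ t ∈ Icc a b,
      HasDerivWithinAt (boundaryTerm ρ ν ε u1 u2 u3 η (deriv η)) (I t - J t) (Icc a b) t := by
    intro t ht
    refine (hasDerivWithinAt_boundaryTerm hε (hu2 t ht) (hu3 t ht) (hu4 t ht)
      (hη.differentiable (by simp) t).hasDerivAt
      (hη1.differentiable one_ne_zero t).hasDerivAt).congr_deriv ?_
    simp only [hI, hJ, hη2, inner_add_left]
    ring
  have hIint : IntervalIntegrable I volume a b := by
    refine ContinuousOn.intervalIntegrable_of_Icc hab ?_
    simp only [hI, hη2]
    fun_prop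
  have hJint : IntervalIntegrable J volume a b := by
    refine ContinuousOn.intervalIntegrable_of_Icc hab ?_
    simp only [hJ, eulerLagrangeOperator]
    fun_prop
  have hftc := integral_eq_sub_of_hasDeriv_right_of_le hab
    (fun t ht => (hderiv t ht).continuousWithinAt)
    (fun t ht => ((hderiv t (Ioo_subset_Icc_self ht)).hasDerivAt
      (Icc_mem_nhds ht.1 ht.2)).hasDerivWithinAt)
    (hIint.sub hJint)
  rw [integral_sub hIint hJint] at hftc
  linarith

variable {T : ℝ} {L : ℝ → F}

theorem eqOn_zero_of_forall_integral_add_boundaryTerm_eq_zero (hT : 0 < T)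
    (hL : ContinuousOn L (Icc 0 T))
    (h : ∀ η : ℝ → F, ContDiff ℝ ∞ η → η 0 = 0 → deriv η 0 = 0 →
      (∫ t in (0 : ℝ)..T, exp (-t / ε) * ⟪L t, η t⟫)
        + boundaryTerm ρ ν ε u1 u2 u3 η (deriv η) T = 0) :
    EqOn L 0 (Icc 0 T) := by
  have hexpL := eqOn_zero_of_forall_intervalIntegral_inner_eq_zero hT
    (f := fun t => exp (-t / ε) • L t) (by fun_prop) fun η hη _ hsupp => by
      have h0 : (0 : ℝ) ∉ tsupport η := fun h => (hsupp h).1.false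
      have hT' : T ∉ tsupport η := fun h => (hsupp h).2.false
      simpa [boundaryTerm, image_eq_zero_of_notMem_tsupport hT', deriv_of_notMem_tsupport hT',
        real_inner_smul_left] using
        h η hη (image_eq_zero_of_notMem_tsupport h0) (deriv_of_notMem_tsupport h0)
  intro t ht
  simpa [(exp_pos _).ne'] using hexpL ht

theorem boundaryConditions_of_forall_integral_add_boundaryTerm_eq_zero (hε : ε ≠ 0) (hT : 0 < T)
    (hL : EqOn L 0 (Icc 0 T))
    (h : ∀ η : ℝ → F, ContDiff ℝ ∞ η → η 0 = 0 → deriv η 0 = 0 →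
      (∫ t in (0 : ℝ)..T, exp (-t / ε) * ⟪L t, η t⟫)
        + boundaryTerm ρ ν ε u1 u2 u3 η (deriv η) T = 0) :
    (ε ^ 2 * ρ) • u2 T = 0 ∧ (-(ε ^ 2 * ρ)) • u3 T + (ε * ν) • u1 T = 0 := by
  obtain ⟨hu2T, hb⟩ := eq_zero_of_forall_inner_deriv_add_inner_eq_zero
      (a := (ε ^ 2 * ρ) • u2 T) (b := (ε * ρ) • u2 T - (ε ^ 2 * ρ) • u3 T + (ε * ν) • u1 T)
      hT.ne' fun η hη h0 h0' => by
    have := h η hη h0 h0'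
    rw [integral_congr (g := fun _ => 0) fun t ht => by simp [hL (uIcc_of_le hT.le ▸ ht)],
      intervalIntegral.integral_zero, zero_add, boundaryTerm] at this
    exact (mul_eq_zero.mp this).resolve_left (exp_pos _).ne'
  have hu2T' : (ε * ρ) • u2 T = 0 := by
    rw [show ε * ρ = ε⁻¹ * (ε ^ 2 * ρ) by field_simp, mul_smul, hu2T, smul_zero]
  rw [hu2T', zero_sub] at hb
  exact ⟨hu2T, by rwa [neg_smul]⟩

end InnerProductSpace

theorem wide_euler_lagrange_equation (d : ℕ) (ρ ν ε T : ℝ)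
    (hε : 0 < ε) (hT : 0 < T)
    (E : EuclideanSpace ℝ (Fin d) → ℝ) (hE : ContDiff ℝ 1 E)
    (u u1 u2 u3 u4 : ℝ → EuclideanSpace ℝ (Fin d))
    (hu1 : ∀ t ∈ Set.Icc (0 : ℝ) T, HasDerivWithinAt u (u1 t) (Set.Icc 0 T) t)
    (hu2 : ∀ t ∈ Set.Icc (0 : ℝ) T, HasDerivWithinAt u1 (u2 t) (Set.Icc 0 T) t)
    (hu3 : ∀ t ∈ Set.Icc (0 : ℝ) T, HasDerivWithinAt u2 (u3 t) (Set.Icc 0 T) t)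
    (hu4 : ∀ t ∈ Set.Icc (0 : ℝ) T, HasDerivWithinAt u3 (u4 t) (Set.Icc 0 T) t)
    (hu4c : ContinuousOn u4 (Set.Icc 0 T))
    (hvar : ∀ η : ℝ → EuclideanSpace ℝ (Fin d),
      ContDiff ℝ (⊤ : ℕ∞) η → η 0 = 0 → deriv η 0 = 0 →
      (∫ t in (0 : ℝ)..T, Real.exp (-t / ε) *
          (ε ^ 2 * ρ * ⟪u2 t, iteratedDeriv 2 η t⟫
            + ε * ν * ⟪u1 t, deriv η t⟫
            + ⟪gradient E (u t), η t⟫)) = 0) :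
    (∀ t ∈ Set.Icc (0 : ℝ) T,
        (ε ^ 2 * ρ) • u4 t - (2 * ε * ρ) • u3 t + (ρ - ε * ν) • u2 t + ν • u1 t
          + gradient E (u t) = 0)
      ∧ (ε ^ 2 * ρ) • u2 T = 0
      ∧ (-(ε ^ 2 * ρ)) • u3 T + (ε * ν) • u1 T = 0 := by
  have hu1c : ContinuousOn u1 (Icc 0 T) := fun t ht => (hu2 t ht).continuousWithinAt
  have hu2c : ContinuousOn u2 (Icc 0 T) := fun t ht => (hu3 t ht).continuousWithinAt
  have hu3c : ContinuousOn u3 (Icc 0 T) := fun t ht => (hu4 t ht).continuousWithinAt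
  have hgrad : ContinuousOn (fun t => gradient E (u t)) (Icc 0 T) :=
    ((InnerProductSpace.toDual ℝ _).symm.continuous.comp (hE.continuous_fderiv one_ne_zero)
      ).comp_continuousOn fun t ht => (hu1 t ht).continuousWithinAt
  set L := fun t => eulerLagrangeOperator ρ ν ε u1 u2 u3 u4 t + gradient E (u t)
  have hLc : ContinuousOn L (Icc 0 T) := by
    simp only [L, eulerLagrangeOperator]
    fun_prop
  have hweak : ∀ η, ContDiff ℝ ∞ η → η 0 = 0 → deriv η 0 = 0 →
      (∫ t in (0 : ℝ)..T, exp (-t / ε) * ⟪L t, η t⟫)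
        + boundaryTerm ρ ν ε u1 u2 u3 η (deriv η) T = 0 := by
    intro η hη h0 h0'
    have := integral_firstVariation_eq (ρ := ρ) (ν := ν) hε.ne' hT.le hu2 hu3 hu4 hu4c hgrad
      (hη.of_le (WithTop.coe_le_coe.mpr le_top))
    have hB0 : boundaryTerm ρ ν ε u1 u2 u3 η (deriv η) 0 = 0 := by simp [boundaryTerm, h0, h0']
    rw [hvar η hη h0 h0', hB0, sub_zero] at this
    exact this.symm
  have hL := eqOn_zero_of_forall_integral_add_boundaryTerm_eq_zero hT hLc hweak
  exact ⟨fun t ht => hL ht,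
    boundaryConditions_of_forall_integral_add_boundaryTerm_eq_zero hε.ne' hT hL hweak⟩
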